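/- arXiv:1701.04609 — 8 statements merged into one kernel-verified Lean document; each statement's English description precedes it below -/
import Mathlib

section
/- Let d ≥ 2 and a_1, ..., a_d be nonnegative integers with a_1 ≥ 2 + Σ_{i=2}^d a_i, and let p(x) = x^d - a_1 x^{d-1} + a_2 x^{d-2} - ... + (-1)^d a_d. Then p has a unique real root β in (1, ∞), and this root satisfies β > a_1 - 1. -/
/-!
Substituting `u = 1/x` turns `p(x) = 0` into `q(u) = 0` for the reversed polynomial
`q(u) = 1 - a₁ u + r(u)`, where `r(u) = Σ_{i ≥ 2} (-1)^i aᵢ uⁱ`. With `S = a₂ + ⋯ + a_d ≤ a₁ - 2`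
one has `|r(u)| ≤ S u²` on `[0, 1]`, and `r` is `S`-Lipschitz on `[0, 1/2]`. The first bound gives
`q(u) ≤ 1 - 2u < 0` on `(1/2, 1]` and `q(1/(a₁ - 1)) ≤ -1/(a₁ - 1)² < 0`; the second makes `q` strictly
decreasing on `[0, 1/2]`. Since `q(0) = 1`, `q` has exactly one zero in `(0, 1]`, and it lies below
`1/(a₁ - 1)`.
-/

open Finset

lemma abs_pow_sub_pow_le_of_abs_le_half {u v : ℝ} (hu : |u| ≤ 1 / 2) (hv : |v| ≤ 1 / 2) (n : ℕ) :
    |v ^ n - u ^ n| ≤ |v - u| := by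
  have hn2 : (n : ℝ) ≤ 2 ^ (n - 1) := by
    exact_mod_cast (show n ≤ 2 ^ (n - 1) by have := @Nat.lt_two_pow_self (n - 1); omega)
  calc |v ^ n - u ^ n| ≤ |v - u| * n * max |v| |u| ^ (n - 1) := abs_pow_sub_pow_le ..
    _ ≤ |v - u| * 2 ^ (n - 1) * (1 / 2) ^ (n - 1) := by gcongr; exact max_le hv hu
    _ = |v - u| := by rw [mul_assoc, ← mul_pow]; norm_num

lemma abs_sum_mul_pow_le_mul_sq (s : Finset ℕ) (hs : ∀ i ∈ s, 2 ≤ i) (b : ℕ → ℝ) {u : ℝ}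
    (hu₀ : 0 ≤ u) (hu₁ : u ≤ 1) : |∑ i ∈ s, b i * u ^ i| ≤ (∑ i ∈ s, |b i|) * u ^ 2 := by
  rw [sum_mul]
  refine (abs_sum_le_sum_abs _ _).trans (sum_le_sum fun i hi => ?_)
  rw [abs_mul, abs_of_nonneg (pow_nonneg hu₀ i)]
  exact mul_le_mul_of_nonneg_left (pow_le_pow_of_le_one hu₀ hu₁ (hs i hi)) (abs_nonneg _)

lemma abs_sum_mul_pow_sub_le (s : Finset ℕ) (b : ℕ → ℝ) {u v : ℝ}
    (hu : |u| ≤ 1 / 2) (hv : |v| ≤ 1 / 2) :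
    |∑ i ∈ s, b i * v ^ i - ∑ i ∈ s, b i * u ^ i| ≤ (∑ i ∈ s, |b i|) * |v - u| := by
  rw [← sum_sub_distrib, sum_mul]
  refine (abs_sum_le_sum_abs _ _).trans (sum_le_sum fun i _ => ?_)
  rw [← mul_sub, abs_mul]
  exact mul_le_mul_of_nonneg_left (abs_pow_sub_pow_le_of_abs_le_half hu hv i)
    (abs_nonneg _)

def altPoly (d : ℕ) (a : ℕ → ℝ) (x : ℝ) : ℝ :=
  x ^ d + ∑ i ∈ Icc 1 d, (-1) ^ i * a i * x ^ (d - i)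

def altPolyRev (d : ℕ) (a : ℕ → ℝ) (u : ℝ) : ℝ :=
  1 + ∑ i ∈ Icc 1 d, (-1) ^ i * a i * u ^ i

lemma altPoly_eq_pow_mul_altPolyRev_inv (d : ℕ) (a : ℕ → ℝ) {x : ℝ} (hx : x ≠ 0) :
    altPoly d a x = x ^ d * altPolyRev d a x⁻¹ := by
  rw [altPoly, altPolyRev, mul_add, mul_one, mul_sum]
  congr 1
  refine sum_congr rfl fun i hi => ?_
  rw [pow_sub₀ x hx (mem_Icc.1 hi).2, inv_pow]
  ring

lemma altPoly_eq_zero_iff (d : ℕ) (a : ℕ → ℝ) {x : ℝ} (hx : x ≠ 0) :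
    altPoly d a x = 0 ↔ altPolyRev d a x⁻¹ = 0 := by
  rw [altPoly_eq_pow_mul_altPolyRev_inv d a hx, mul_eq_zero, or_iff_right (pow_ne_zero d hx)]

lemma altPolyRev_eq {d : ℕ} (hd : 1 ≤ d) (a : ℕ → ℝ) (u : ℝ) :
    altPolyRev d a u = 1 - a 1 * u + ∑ i ∈ Icc 2 d, (-1) ^ i * a i * u ^ i := by
  rw [altPolyRev, ← insert_Icc_add_one_left_eq_Icc hd, sum_insert (by simp)]
  ring

lemma sum_abs_neg_one_pow_mul {s : Finset ℕ} {a : ℕ → ℝ} (ha : ∀ i ∈ s, 0 ≤ a i) :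
    ∑ i ∈ s, |(-1) ^ i * a i| = ∑ i ∈ s, a i :=
  sum_congr rfl fun i hi => by rw [abs_mul, abs_neg_one_pow, one_mul, abs_of_nonneg (ha i hi)]

section Dominant

variable {d : ℕ} {a : ℕ → ℝ} (hd : 1 ≤ d) (ha : ∀ i ∈ Icc 2 d, 0 ≤ a i)
  (hdom : 2 + ∑ i ∈ Icc 2 d, a i ≤ a 1)
include hd ha hdom

lemma altPolyRev_le {u : ℝ} (hu₀ : 0 ≤ u) (hu₁ : u ≤ 1) :
    altPolyRev d a u ≤ 1 - a 1 * u + (a 1 - 2) * u ^ 2 := by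
  have hr := abs_sum_mul_pow_le_mul_sq (Icc 2 d) (fun i hi => (mem_Icc.1 hi).1)
    (fun i => (-1) ^ i * a i) hu₀ hu₁
  rw [altPolyRev_eq hd]
  nlinarith [le_abs_self (∑ i ∈ Icc 2 d, (-1) ^ i * a i * u ^ i),
    (sum_abs_neg_one_pow_mul ha).le, sq_nonneg u]

lemma altPolyRev_neg_of_half_lt {u : ℝ} (hu : 1 / 2 < u) (hu₁ : u ≤ 1) :
    altPolyRev d a u < 0 := by
  have := altPolyRev_le hd ha hdom (by linarith) hu₁
  nlinarith [mul_nonneg (show 0 ≤ a 1 - 2 by linarith [sum_nonneg ha])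
    (show 0 ≤ u - u ^ 2 by nlinarith)]

lemma altPolyRev_inv_sub_one_neg : altPolyRev d a (a 1 - 1)⁻¹ < 0 := by
  have ha₁ : 1 ≤ a 1 - 1 := by linarith [sum_nonneg ha]
  have hw₀ : 0 < (a 1 - 1)⁻¹ := by positivity
  have key : 1 - a 1 * (a 1 - 1)⁻¹ + (a 1 - 2) * (a 1 - 1)⁻¹ ^ 2 = -((a 1 - 1)⁻¹ ^ 2) := by
    field_simp
    ring
  linarith [altPolyRev_le hd ha hdom hw₀.le (inv_le_one_of_one_le₀ ha₁), sq_pos_of_pos hw₀]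

lemma strictAntiOn_altPolyRev : StrictAntiOn (altPolyRev d a) (Set.Icc 0 (1 / 2)) := by
  intro u ⟨hu₀, hu₁⟩ v ⟨hv₀, hv₁⟩ huv
  have hr := abs_sum_mul_pow_sub_le (Icc 2 d) (fun i => (-1) ^ i * a i)
    (by rwa [abs_of_nonneg hu₀]) (by rwa [abs_of_nonneg hv₀])
  rw [abs_of_pos (sub_pos.2 huv)] at hr
  simp only [altPolyRev_eq hd]
  nlinarith [le_abs_self (∑ i ∈ Icc 2 d, (-1) ^ i * a i * v ^ i
      - ∑ i ∈ Icc 2 d, (-1) ^ i * a i * u ^ i), (sum_abs_neg_one_pow_mul ha).le]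

lemma exists_altPolyRev_eq_zero : ∃ u ∈ Set.Ioo 0 (a 1 - 1)⁻¹, altPolyRev d a u = 0 := by
  have hw₀ : 0 < (a 1 - 1)⁻¹ := inv_pos.2 (by linarith [sum_nonneg ha])
  have hneg := altPolyRev_inv_sub_one_neg hd ha hdom
  have hq₀ : altPolyRev d a 0 = 1 := by
    rw [altPolyRev, sum_eq_zero fun i hi => by
      rw [zero_pow (by have := (mem_Icc.1 hi).1; omega), mul_zero], add_zero]
  have hcont : ContinuousOn (altPolyRev d a) (Set.Icc 0 (a 1 - 1)⁻¹) := by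
    unfold altPolyRev; fun_prop
  obtain ⟨u, ⟨hu₀, hu₁⟩, hu⟩ :=
    intermediate_value_Icc' hw₀.le hcont ⟨hneg.le, by rw [hq₀]; exact zero_le_one⟩
  refine ⟨u, ⟨lt_of_le_of_ne hu₀ ?_, lt_of_le_of_ne hu₁ ?_⟩, hu⟩ <;> rintro rfl
  · simp [hq₀] at hu
  · linarith

lemma eq_of_altPolyRev_eq_zero {u v : ℝ} (hu : u ∈ Set.Ioc 0 1) (hv : v ∈ Set.Ioc 0 1)
    (hu₀ : altPolyRev d a u = 0) (hv₀ : altPolyRev d a v = 0) : u = v := by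
  have le_half : ∀ w ∈ Set.Ioc (0 : ℝ) 1, altPolyRev d a w = 0 → w ∈ Set.Icc 0 (1 / 2) :=
    fun w ⟨hw₀, hw₁⟩ hw => ⟨hw₀.le, not_lt.1 fun h =>
      (altPolyRev_neg_of_half_lt hd ha hdom h hw₁).ne hw⟩
  exact (strictAntiOn_altPolyRev hd ha hdom).injOn (le_half u hu hu₀) (le_half v hv hv₀)
    (hu₀.trans hv₀.symm)

end Dominant

theorem stmt4 (d : ℕ) (hd : 2 ≤ d) (a : ℕ → ℤ)
    (ha : ∀ i, 1 ≤ i → i ≤ d → 0 ≤ a i)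
    (hdom : a 1 ≥ 2 + ∑ i ∈ Finset.Icc 2 d, a i) :
    (∃! β : ℝ, 1 < β ∧ β ^ d + ∑ i ∈ Finset.Icc 1 d, (-1 : ℝ) ^ i * a i * β ^ (d - i) = 0) ∧
    ∀ β : ℝ, 1 < β → β ^ d + ∑ i ∈ Finset.Icc 1 d, (-1 : ℝ) ^ i * a i * β ^ (d - i) = 0 →
      (a 1 : ℝ) - 1 < β := by
  have hd₁ : 1 ≤ d := by omega
  have ha' : ∀ i ∈ Icc 2 d, (0 : ℝ) ≤ a i := fun i hi => by
    have := mem_Icc.1 hi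
    exact_mod_cast ha i (by omega) this.2
  have hdom' : 2 + ∑ i ∈ Icc 2 d, (a i : ℝ) ≤ a 1 := by exact_mod_cast hdom
  have hw₁ : ((a 1 : ℝ) - 1)⁻¹ ≤ 1 := inv_le_one_of_one_le₀ (by linarith [sum_nonneg ha'])
  obtain ⟨u₀, ⟨hu₀, hu₀w⟩, hroot⟩ := exists_altPolyRev_eq_zero hd₁ ha' hdom'
  have root_eq : ∀ β : ℝ, 1 < β → altPoly d (fun i => a i) β = 0 → β = u₀⁻¹ := by
    intro β hβ hβ₀
    rw [altPoly_eq_zero_iff d _ (by positivity)] at hβ₀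
    rw [← inv_inv β, eq_of_altPolyRev_eq_zero hd₁ ha' hdom'
      ⟨by positivity, inv_le_one_of_one_le₀ hβ.le⟩ ⟨hu₀, by linarith⟩ hβ₀ hroot]
  refine ⟨⟨u₀⁻¹, ⟨(one_lt_inv₀ hu₀).2 (by linarith), ?_⟩, fun β hβ => root_eq β hβ.1 hβ.2⟩,
    fun β hβ hβ₀ => ?_⟩
  · exact (altPoly_eq_zero_iff d _ (inv_ne_zero hu₀.ne')).2 (by rwa [inv_inv])
  · rw [root_eq β hβ hβ₀]
    exact (lt_inv_comm₀ hu₀ (inv_pos.1 (hu₀.trans hu₀w))).1 hu₀w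
end

section
/- Let m ≥ 1 and let β > 1 be the real root of x^3 - m x^2 - m x - m. Set r_0 = m/β, r_1 = -m/β - m/β², and α = β/(β+1). Then 0 < r_0 < α < -r_1 < 1. -/
theorem stmt6 (m : ℤ) (hm : 1 ≤ m) (β : ℝ) (hβ : 1 < β)
    (hroot : β ^ 3 = m * β ^ 2 + m * β + m) :
    0 < m / β ∧ m / β < β / (β + 1) ∧ β / (β + 1) < m / β + m / β ^ 2 ∧
      m / β + m / β ^ 2 < 1 := by
  have hb0 : (0:ℝ) < β := by linarith
  have hb1 : (0:ℝ) < β + 1 := by linarith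
  have hM : (1:ℝ) ≤ (m:ℝ) := by exact_mod_cast hm
  have hq : (0:ℝ) < β ^ 2 + β + 1 := by positivity
  have key : (m:ℝ) * (β + 1) < β ^ 2 := by
    have h1 : (m:ℝ) * (β + 1) * (β ^ 2 + β + 1) < β ^ 2 * (β ^ 2 + β + 1) := by
      nlinarith [sq_nonneg β, mul_pos hb0 hb0]
    exact lt_of_mul_lt_mul_right h1 hq.le
  have hsum : (m:ℝ) / β + (m:ℝ) / β ^ 2 = (m:ℝ) * (β + 1) / β ^ 2 := by
    field_simp
  refine ⟨div_pos (by linarith) hb0, ?_, ?_, ?_⟩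
  · rw [div_lt_div_iff₀ hb0 hb1]
    nlinarith [key]
  · rw [hsum, div_lt_div_iff₀ hb1 (by positivity : (0:ℝ) < β ^ 2)]
    nlinarith [key, mul_pos hb0 hb0]
  · rw [hsum, div_lt_one (by positivity : (0:ℝ) < β ^ 2)]
    exact key
end

section
/- Let m ≥ 1 and let β > 1 be the real root of x^3 - m x^2 - m x - m. Let r = (r_0, r_1) = (m/β, -m/β - m/β²), α = β/(β+1), and define τ(z_0, z_1) = (z_1, -⌊r_0 z_0 + r_1 z_1 + α⌋) on ℤ². Then τ(0,1) = (1,1), τ(1,1) = (1,0), τ(1,0) = (0,-1), τ(0,-1) = (-1,-1), τ(-1,-1) = (-1,0), and τ(-1,0) = (0,0). In particular τ⁶(0,1) = (0,0). -/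
/-- The two-dimensional α-SRS map `τ_{(r₀,r₁),α}`. -/
noncomputable def srsTau (r0 r1 α : ℝ) (z : ℤ × ℤ) : ℤ × ℤ :=
  (z.2, -⌊r0 * z.1 + r1 * z.2 + α⌋)
theorem stmt7 (m : ℤ) (hm : 1 ≤ m) (β : ℝ) (hβ : 1 < β)
    (hroot : β ^ 3 = m * β ^ 2 + m * β + m) :
    let r0 : ℝ := m / β
    let r1 : ℝ := -(m / β) - m / β ^ 2
    let α : ℝ := β / (β + 1)
    srsTau r0 r1 α (0, 1) = (1, 1) ∧ srsTau r0 r1 α (1, 1) = (1, 0) ∧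
    srsTau r0 r1 α (1, 0) = (0, -1) ∧ srsTau r0 r1 α (0, -1) = (-1, -1) ∧
    srsTau r0 r1 α (-1, -1) = (-1, 0) ∧ srsTau r0 r1 α (-1, 0) = (0, 0) ∧
    (srsTau r0 r1 α)^[6] (0, 1) = (0, 0) := by
  intro r0 r1 α
  have hβ0 : (0:ℝ) < β := by linarith
  have hm' : (1:ℝ) ≤ (m:ℝ) := by exact_mod_cast hm
  have hs : (0:ℝ) < β^2+β+1 := by positivity
  have hβ1 : (0:ℝ) < β + 1 := by linarith
  have hD : (0:ℝ) < (β+1)*(β^2+β+1) := by positivity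
  have hcube : β^2 + β + 1 ≤ β^3 := by nlinarith [hroot, hm', hβ0, sq_nonneg β]
  have hr0e : r0 = β^2/(β^2+β+1) := by
    show (m:ℝ)/β = _
    field_simp
    linear_combination -hroot
  have hr1e : r1 = -(β^2+β)/(β^2+β+1) := by
    show -((m:ℝ)/β) - m/β^2 = _
    field_simp
    ring_nf
    nlinarith [hroot]
  have hαe : α = β/(β+1) := rfl
  have floorD : ∀ (p : ℝ) (n : ℤ), (n:ℝ) * ((β+1)*(β^2+β+1)) ≤ p →
      p < ((n:ℝ)+1) * ((β+1)*(β^2+β+1)) → ⌊p / ((β+1)*(β^2+β+1))⌋ = n := by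
    intro p n h1 h2
    rw [Int.floor_eq_iff]
    constructor
    · rw [le_div_iff₀ hD]; exact h1
    · rw [div_lt_iff₀ hD]; push_cast; exact h2
  have h1 : srsTau r0 r1 α (0, 1) = (1, 1) := by
    simp only [srsTau, Prod.mk.injEq]
    refine ⟨trivial, ?_⟩
    have e : r0 * ((0:ℤ):ℝ) + r1 * ((1:ℤ):ℝ) + α = (-β^2) / ((β+1)*(β^2+β+1)) := by
      rw [hr0e, hr1e, hαe]; push_cast; field_simp; ring
    rw [e, floorD _ (-1) (by push_cast; nlinarith) (by push_cast; nlinarith)]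
    norm_num
  have h2 : srsTau r0 r1 α (1, 1) = (1, 0) := by
    simp only [srsTau, Prod.mk.injEq]
    refine ⟨trivial, ?_⟩
    have e : r0 * ((1:ℤ):ℝ) + r1 * ((1:ℤ):ℝ) + α = (β^3) / ((β+1)*(β^2+β+1)) := by
      rw [hr0e, hr1e, hαe]; push_cast; field_simp; ring
    rw [e, floorD _ 0 (by push_cast; nlinarith) (by push_cast; nlinarith)]
    norm_num
  have h3 : srsTau r0 r1 α (1, 0) = (0, -1) := by
    simp only [srsTau, Prod.mk.injEq]
    refine ⟨trivial, ?_⟩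
    have e : r0 * ((1:ℤ):ℝ) + r1 * ((0:ℤ):ℝ) + α = (2*β^3+2*β^2+β) / ((β+1)*(β^2+β+1)) := by
      rw [hr0e, hr1e, hαe]; push_cast; field_simp; ring
    rw [e, floorD _ 1 (by push_cast; nlinarith) (by push_cast; nlinarith)]
  have h4 : srsTau r0 r1 α (0, -1) = (-1, -1) := by
    simp only [srsTau, Prod.mk.injEq]
    refine ⟨trivial, ?_⟩
    have e : r0 * ((0:ℤ):ℝ) + r1 * ((-1:ℤ):ℝ) + α = (2*β^3+3*β^2+2*β) / ((β+1)*(β^2+β+1)) := by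
      rw [hr0e, hr1e, hαe]; push_cast; field_simp; ring
    rw [e, floorD _ 1 (by push_cast; nlinarith) (by push_cast; nlinarith)]
  have h5 : srsTau r0 r1 α (-1, -1) = (-1, 0) := by
    simp only [srsTau, Prod.mk.injEq]
    refine ⟨trivial, ?_⟩
    have e : r0 * ((-1:ℤ):ℝ) + r1 * ((-1:ℤ):ℝ) + α = (β^3+2*β^2+2*β) / ((β+1)*(β^2+β+1)) := by
      rw [hr0e, hr1e, hαe]; push_cast; field_simp; ring
    rw [e, floorD _ 0 (by push_cast; nlinarith) (by push_cast; nlinarith)]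
    norm_num
  have h6 : srsTau r0 r1 α (-1, 0) = (0, 0) := by
    simp only [srsTau, Prod.mk.injEq]
    refine ⟨trivial, ?_⟩
    have e : r0 * ((-1:ℤ):ℝ) + r1 * ((0:ℤ):ℝ) + α = β / ((β+1)*(β^2+β+1)) := by
      rw [hr0e, hr1e, hαe]; push_cast; field_simp; ring
    rw [e, floorD _ 0 (by push_cast; nlinarith) (by push_cast; nlinarith)]
    norm_num
  refine ⟨h1, h2, h3, h4, h5, h6, ?_⟩
  rw [show (6:ℕ) = 5+1 from rfl, Function.iterate_succ_apply, h1,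
      show (5:ℕ) = 4+1 from rfl, Function.iterate_succ_apply, h2,
      show (4:ℕ) = 3+1 from rfl, Function.iterate_succ_apply, h3,
      show (3:ℕ) = 2+1 from rfl, Function.iterate_succ_apply, h4,
      show (2:ℕ) = 1+1 from rfl, Function.iterate_succ_apply, h5,
      show (1:ℕ) = 0+1 from rfl, Function.iterate_succ_apply, h6,
      Function.iterate_zero_apply]
end

section
/- Let m ≥ 1 and β > 1 the real root of x³ - m x² - m x - m. Set r = (r_0, r_1) = (m/β, -m/β - m/β²). Let z = (z_0, z_1) ∈ ℤ² with -m-1 ≤ z_0 ≤ m, |z_1| ≤ m+1, and |z_0 - z_1| ≤ m+1, and let α = β/(β+1). Then ⌊r_0 z_0 + r_1 z_1 + α⌋ = z_0 - z_1 if z_0 ≥ 0, or if z_0 = -1 and z_1 ≤ -1; and ⌊r_0 z_0 + r_1 z_1 + α⌋ = z_0 - z_1 + 1 if z_0 ≤ -2, or if z_0 = -1 and z_1 ≥ 0. -/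
/-!
Since `β³ = m(β² + β + 1)`, we have `m/β + m/β² + m/β³ = 1`, so `r₀ = 1 - m/β² - m/β³` and
`r₁ = -1 + m/β³`. Hence `r₀ z₀ + r₁ z₁ + α = (z₀ - z₁) + c` with the small correction
`c = α - z₀ m/β² + (z₁ - z₀) m/β³`, and the claim is that `⌊c⌋` is `0` or `1` according to the case.
After clearing denominators and using the cubic, every bound on `c` reduces to `m ≥ 1` and
`m(β + 1) < β²`, which is the cubic read as `β (β² - mβ - m) = m > 0`.
-/

noncomputable def correction (m β x y : ℝ) : ℝ := β / (β + 1) - x * (m / β ^ 2) + (y - x) * (m / β ^ 3)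

section

variable {m β : ℝ}

theorem pos_of_cube_eq (hm : 0 < m) (hroot : β ^ 3 = m * β ^ 2 + m * β + m) : 0 < β := by
  have : 0 < β ^ 3 := by rw [hroot]; nlinarith [sq_nonneg (β + 1 / 2)]
  exact (Odd.pow_pos_iff (by decide)).mp this

theorem mul_add_one_lt_sq (hm : 0 < m) (hroot : β ^ 3 = m * β ^ 2 + m * β + m) :
    m * (β + 1) < β ^ 2 := by
  have := pos_of_cube_eq hm hroot
  nlinarith

theorem lt_of_cube_eq (hm : 0 < m) (hroot : β ^ 3 = m * β ^ 2 + m * β + m) : m < β := by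
  have := pos_of_cube_eq hm hroot
  nlinarith [mul_add_one_lt_sq hm hroot]

theorem div_add_div_sq_add_div_cube (hm : 0 < m) (hroot : β ^ 3 = m * β ^ 2 + m * β + m) :
    m / β + m / β ^ 2 + m / β ^ 3 = 1 := by
  have := (pos_of_cube_eq hm hroot).ne'
  field_simp
  linear_combination -hroot

theorem mul_div_sq_add_mul_div_cube_le (hm : 1 ≤ m) (hroot : β ^ 3 = m * β ^ 2 + m * β + m) :
    m * (m / β ^ 2) + (m + 1) * (m / β ^ 3) ≤ β / (β + 1) := by
  have := pos_of_cube_eq (by linarith) hroot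
  have := mul_add_one_lt_sq (by linarith) hroot
  rw [← sub_nonneg]
  field_simp
  nlinarith

theorem linear_form_eq_add_correction (hm : 0 < m) (hroot : β ^ 3 = m * β ^ 2 + m * β + m)
    (x y : ℝ) :
    m / β * x + (-(m / β) - m / β ^ 2) * y + β / (β + 1) = x - y + correction m β x y := by
  unfold correction
  linear_combination (x - y) * div_add_div_sq_add_div_cube hm hroot

theorem floor_correction_of_nonneg {x y : ℝ} (hm : 1 ≤ m)
    (hroot : β ^ 3 = m * β ^ 2 + m * β + m) (hx : 0 ≤ x) (hxm : x ≤ m) (hxy : |x - y| ≤ m + 1) :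
    ⌊correction m β x y⌋ = 0 := by
  have hβ := pos_of_cube_eq (by linarith) hroot
  have hupper : (m + 1) * (m / β ^ 3) + β / (β + 1) < 1 := by
    have := mul_add_one_lt_sq (by linarith) hroot
    rw [← sub_pos]
    field_simp
    nlinarith
  have hlower := mul_div_sq_add_mul_div_cube_le hm hroot
  have ha : 0 < m / β ^ 2 := by positivity
  have hb : 0 < m / β ^ 3 := by positivity
  obtain ⟨hxy, hxy'⟩ := abs_le.mp hxy
  rw [Int.floor_eq_zero_iff, correction]
  constructor <;> nlinarith

theorem floor_correction_of_eq_neg_one_of_le {x y : ℝ} (hm : 1 ≤ m)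
    (hroot : β ^ 3 = m * β ^ 2 + m * β + m) (hx : x = -1) (hy : y ≤ -1) (hxy : x - y ≤ m + 1) :
    ⌊correction m β x y⌋ = 0 := by
  have hβ := pos_of_cube_eq (by linarith) hroot
  have hupper : m / β ^ 2 + β / (β + 1) < 1 := by
    have := mul_add_one_lt_sq (by linarith) hroot
    rw [← sub_pos]
    field_simp
    nlinarith
  have hlower := mul_div_sq_add_mul_div_cube_le hm hroot
  have ha : 0 < m / β ^ 2 := by positivity
  have hb : 0 < m / β ^ 3 := by positivity
  subst hx
  rw [Int.floor_eq_zero_iff, correction]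
  constructor <;> nlinarith

theorem floor_correction_of_le_neg_two {x y : ℝ} (hm : 1 ≤ m)
    (hroot : β ^ 3 = m * β ^ 2 + m * β + m) (hx : x ≤ -2) (hxm : -m - 1 ≤ x) (hy : -(m + 1) ≤ y)
    (hxy : -(m + 1) ≤ x - y) :
    ⌊correction m β x y⌋ = 1 := by
  have hβ := pos_of_cube_eq (by linarith) hroot
  have := mul_add_one_lt_sq (by linarith) hroot
  have := lt_of_cube_eq (by linarith) hroot
  have hupper : (m + 1) * (m / β ^ 2 + m / β ^ 3) + β / (β + 1) < 2 := by
    rw [← sub_pos]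
    field_simp
    nlinarith
  -- follows from `1 ≤ m/β² + m/β³ + α` and `m · m/β³ < m/β²`, i.e. `m < β`
  have hlower : 1 ≤ 2 * (m / β ^ 2) + (1 - m) * (m / β ^ 3) + β / (β + 1) := by
    rw [← sub_nonneg]
    field_simp
    nlinarith
  have ha : 0 < m / β ^ 2 := by positivity
  have hb : 0 < m / β ^ 3 := by positivity
  rw [Int.floor_eq_iff, correction]
  push_cast
  constructor <;> nlinarith

theorem floor_correction_of_eq_neg_one_of_nonneg {x y : ℝ} (hm : 1 ≤ m)
    (hroot : β ^ 3 = m * β ^ 2 + m * β + m) (hx : x = -1) (hy : 0 ≤ y)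
    (hxy : -(m + 1) ≤ x - y) :
    ⌊correction m β x y⌋ = 1 := by
  have hβ := pos_of_cube_eq (by linarith) hroot
  have hlower : 1 ≤ m / β ^ 2 + m / β ^ 3 + β / (β + 1) := by
    have := mul_add_one_lt_sq (by linarith) hroot
    rw [← sub_nonneg]
    field_simp
    nlinarith
  have hupper := mul_div_sq_add_mul_div_cube_le hm hroot
  have hα : β / (β + 1) < 1 := (div_lt_one (by linarith)).mpr (by linarith)
  have ha : 0 < m / β ^ 2 := by positivity
  have hb : 0 < m / β ^ 3 := by positivity
  subst hx
  rw [Int.floor_eq_iff, correction]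
  push_cast
  constructor <;> nlinarith

end

theorem stmt8_general (m : ℤ) (hm : 1 ≤ m) (β : ℝ)
    (hroot : β ^ 3 = m * β ^ 2 + m * β + m)
    (z0 z1 : ℤ) (h0 : -m - 1 ≤ z0) (h0' : z0 ≤ m) (h1 : |z1| ≤ m + 1)
    (h01 : |z0 - z1| ≤ m + 1) :
    ((0 ≤ z0 ∨ (z0 = -1 ∧ z1 ≤ -1)) →
      ⌊(m / β) * z0 + (-(m / β) - m / β ^ 2) * z1 + β / (β + 1)⌋ = z0 - z1) ∧
    ((z0 ≤ -2 ∨ (z0 = -1 ∧ 0 ≤ z1)) →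
      ⌊(m / β) * z0 + (-(m / β) - m / β ^ 2) * z1 + β / (β + 1)⌋ = z0 - z1 + 1) := by
  have hm' : (1 : ℝ) ≤ m := by exact_mod_cast hm
  obtain ⟨hxy, hxy'⟩ := abs_le.mp (by exact_mod_cast h01 : |(z0 : ℝ) - z1| ≤ m + 1)
  rw [linear_form_eq_add_correction (by linarith) hroot, ← Int.cast_sub, Int.floor_intCast_add]
  refine ⟨?_, ?_⟩
  · rintro (hz0 | ⟨hz0, hz1⟩)
    · rw [floor_correction_of_nonneg hm' hroot (by exact_mod_cast hz0) (by exact_mod_cast h0')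
        (by exact_mod_cast h01), add_zero]
    · rw [floor_correction_of_eq_neg_one_of_le hm' hroot (by exact_mod_cast hz0)
        (by exact_mod_cast hz1) hxy', add_zero]
  · rintro (hz0 | ⟨hz0, hz1⟩)
    · rw [floor_correction_of_le_neg_two hm' hroot (by exact_mod_cast hz0) (by exact_mod_cast h0)
        (by exact_mod_cast (abs_le.mp h1).1) hxy]
    · rw [floor_correction_of_eq_neg_one_of_nonneg hm' hroot (by exact_mod_cast hz0)
        (by exact_mod_cast hz1) hxy]

theorem stmt8 (m : ℤ) (hm : 1 ≤ m) (β : ℝ) (hβ : 1 < β)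
    (hroot : β ^ 3 = m * β ^ 2 + m * β + m)
    (z0 z1 : ℤ) (h0 : -m - 1 ≤ z0) (h0' : z0 ≤ m) (h1 : |z1| ≤ m + 1)
    (h01 : |z0 - z1| ≤ m + 1) :
    ((0 ≤ z0 ∨ (z0 = -1 ∧ z1 ≤ -1)) →
      ⌊(m / β) * z0 + (-(m / β) - m / β ^ 2) * z1 + β / (β + 1)⌋ = z0 - z1) ∧
    ((z0 ≤ -2 ∨ (z0 = -1 ∧ 0 ≤ z1)) →
      ⌊(m / β) * z0 + (-(m / β) - m / β ^ 2) * z1 + β / (β + 1)⌋ = z0 - z1 + 1) :=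
  stmt8_general m hm β hroot z0 z1 h0 h0' h1 h01
end

section
/- Let m ≥ 1 and β > 1 the real root of x³ - m x² - m x - m. Then -β/(β+1) < -m²/β² - (m+1)m/β³ and (m+1)m/β² + (m+1)m/β³ < 1 + 1/(β+1). -/
theorem stmt9 (m : ℤ) (hm : 1 ≤ m) (β : ℝ) (hβ : 1 < β)
    (hroot : β ^ 3 = m * β ^ 2 + m * β + m) :
    -β / (β + 1) < -(m ^ 2) / β ^ 2 - (m + 1) * m / β ^ 3 ∧
    (m + 1) * m / β ^ 2 + (m + 1) * m / β ^ 3 < 1 + 1 / (β + 1) := by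
  have hM : (1 : ℝ) ≤ (m : ℝ) := by exact_mod_cast hm
  have hb : (0:ℝ) < β := by linarith
  have hb1 : (0:ℝ) < β + 1 := by linarith
  have h2 : (0:ℝ) < β^2 := by positivity
  have h3 : (0:ℝ) < β^3 := by positivity
  -- m < β
  have hmb : (m : ℝ) < β := by nlinarith [sq_nonneg β, sq_nonneg (β - 1)]
  -- β < m + 1
  have hbm1 : β < (m : ℝ) + 1 := by nlinarith [sq_nonneg β]
  have key1 : ((m:ℝ)^2*β + ((m:ℝ)+1)*m) * (β+1) < β^4 := by nlinarith
  have key2 : ((m:ℝ)+1)*m*(β+1)^2 < (β+2)*β^3 := by nlinarith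
  constructor
  · have e1 : -((m:ℝ)^2)/β^2 - ((m:ℝ)+1)*m/β^3 - (-β/(β+1)) =
        (β^4 - ((m:ℝ)^2*β + ((m:ℝ)+1)*m)*(β+1)) / (β^3*(β+1)) := by
      field_simp; ring
    have : (0:ℝ) < (β^4 - ((m:ℝ)^2*β + ((m:ℝ)+1)*m)*(β+1)) / (β^3*(β+1)) := by
      apply div_pos (by linarith) (by positivity)
    linarith [e1, this]
  · have e2 : (1 + 1/(β+1)) - (((m:ℝ)+1)*m/β^2 + ((m:ℝ)+1)*m/β^3) =
        ((β+2)*β^3 - ((m:ℝ)+1)*m*(β+1)^2) / (β^3*(β+1)) := by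
      field_simp; ring
    have : (0:ℝ) < ((β+2)*β^3 - ((m:ℝ)+1)*m*(β+1)^2) / (β^3*(β+1)) := by
      apply div_pos (by linarith) (by positivity)
    linarith [e2, this]
end

section
/- Let d ≥ 1, α ∈ [0,1), and r = (r_0, ..., r_{d-1}) ∈ ℝ^d with Σ_i |r_i| ≤ α and Σ_{i : r_i < 0} r_i > α - 1. Define τ(z_0,...,z_{d-1}) = (z_1,...,z_{d-1}, z_d) where z_d is the unique integer with 0 ≤ r_0 z_0 + ... + r_{d-1} z_{d-1} + z_d + α < 1. Then the set V = {-1,0,1}^d is invariant under τ, and the unique periodic point of τ in V is the zero vector; consequently every z ∈ V satisfies τ^k(z) = 0 for some k. -/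
/-!
Every digit produced from `{-1,0,1}^d` is `-⌊r·z + α⌋ ∈ {-1, 0}`, since `|r·z| ≤ Σ|r_i| ≤ α < 1`.
So after `d` steps the orbit lies in `{-1,0}^d`, where `r·z` is at most `-Σ_{r_i<0} r_i < 1 - α`,
which makes every further digit `0`. Hence `τ^{2d}` sends `{-1,0,1}^d` to the fixed point `0`,
and a periodic point of `τ` in `{-1,0,1}^d` must be `0` itself.
-/

/-- The d-dimensional α-SRS map `τ_{r,α}` on `ℤ^d`. -/
noncomputable def srsMap (d : ℕ) (r : Fin d → ℝ) (α : ℝ) (z : Fin d → ℤ) : Fin d → ℤ :=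
  fun i => if h : (i : ℕ) + 1 < d then z ⟨(i : ℕ) + 1, h⟩
    else -⌊(∑ j, r j * z j) + α⌋

open Set Function

theorem Function.IsPeriodicPt.eq_of_iterate_eq_fixedPt {X : Type*} {f : X → X} {x c : X}
    {k N : ℕ} (hx : IsPeriodicPt f k x) (hk : 0 < k) (hc : IsFixedPt f c) (hN : f^[N] x = c) :
    x = c :=
  calc x = f^[k * N] x := (hx.mul_const N).eq.symm
    _ = f^[k * N - N] (f^[N] x) := by
      rw [← iterate_add_apply, Nat.sub_add_cancel (Nat.le_mul_of_pos_left N hk)]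
    _ = c := by rw [hN, (hc.iterate _).eq]

theorem intCast_mem_Icc {a b z : ℤ} (hz : z ∈ Icc a b) : (z : ℝ) ∈ Icc (a : ℝ) b :=
  ⟨Int.cast_le.mpr hz.1, Int.cast_le.mpr hz.2⟩

theorem abs_sum_mul_le_sum_abs {ι : Type*} (s : Finset ι) (a z : ι → ℝ)
    (hz : ∀ i ∈ s, z i ∈ Icc (-1) 1) :
    |∑ i ∈ s, a i * z i| ≤ ∑ i ∈ s, |a i| := by
  refine (Finset.abs_sum_le_sum_abs _ _).trans (Finset.sum_le_sum fun i hi => ?_)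
  rw [abs_mul]
  exact mul_le_of_le_one_right (abs_nonneg _) (abs_le.mpr (hz i hi))

theorem sum_mul_le_neg_sum_filter_neg {ι : Type*} (s : Finset ι) (a z : ι → ℝ)
    (hz : ∀ i ∈ s, z i ∈ Icc (-1) 0) :
    ∑ i ∈ s, a i * z i ≤ -∑ i ∈ s.filter (fun i => a i < 0), a i := by
  rw [← Finset.sum_neg_distrib, Finset.sum_filter]
  refine Finset.sum_le_sum fun i hi => ?_
  obtain ⟨hlo, hhi⟩ := hz i hi
  split_ifs <;> nlinarith

/-- The digit `z_d` appended by `srsMap`. -/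
noncomputable def srsDigit {d : ℕ} (r : Fin d → ℝ) (α : ℝ) (z : Fin d → ℤ) : ℤ :=
  -⌊(∑ j, r j * z j) + α⌋

section srsMap

variable {d : ℕ} {r : Fin d → ℝ} {α : ℝ}

theorem srsMap_apply_of_lt (z : Fin d → ℤ) {i : Fin d} (h : (i : ℕ) + 1 < d) :
    srsMap d r α z i = z ⟨(i : ℕ) + 1, h⟩ :=
  dif_pos h

theorem srsMap_apply_of_not_lt (z : Fin d → ℤ) {i : Fin d} (h : ¬(i : ℕ) + 1 < d) :
    srsMap d r α z i = srsDigit r α z :=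
  dif_neg h

theorem srsMap_zero (hα : α ∈ Ico (0 : ℝ) 1) : srsMap d r α 0 = 0 := by
  funext i
  by_cases h : (i : ℕ) + 1 < d
  · rw [srsMap_apply_of_lt _ h]; rfl
  · simp [srsMap_apply_of_not_lt _ h, srsDigit, Int.floor_eq_zero_iff.mpr hα]

theorem srsMap_mapsTo_pi {A : Set ℤ} (hA : ∀ z ∈ univ.pi fun _ => A, srsDigit r α z ∈ A) :
    MapsTo (srsMap d r α) (univ.pi fun _ => A) (univ.pi fun _ => A) := by
  intro z hz i _
  by_cases h : (i : ℕ) + 1 < d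
  · rw [srsMap_apply_of_lt _ h]; exact hz _ (mem_univ _)
  · rw [srsMap_apply_of_not_lt _ h]; exact hA z hz

/-- Coordinate `i` of `τ^m z` is the digit produced at step `i + m + 1 - d`, once that is positive. -/
theorem iterate_srsMap_apply_mem {P : Set (Fin d → ℤ)} {B : Set ℤ}
    (hP : MapsTo (srsMap d r α) P P) (hB : ∀ z ∈ P, srsDigit r α z ∈ B)
    {z : Fin d → ℤ} (hz : z ∈ P) (m : ℕ) (i : Fin d) (hi : d ≤ (i : ℕ) + m) :
    (srsMap d r α)^[m] z i ∈ B := by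
  induction m generalizing i with
  | zero => omega
  | succ m ih =>
    rw [iterate_succ_apply']
    by_cases h : (i : ℕ) + 1 < d
    · rw [srsMap_apply_of_lt _ h]
      exact ih _ (by simp only; omega)
    · rw [srsMap_apply_of_not_lt _ h]
      exact hB _ (hP.iterate m hz)

theorem iterate_srsMap_mem_pi {P : Set (Fin d → ℤ)} {B : Set ℤ}
    (hP : MapsTo (srsMap d r α) P P) (hB : ∀ z ∈ P, srsDigit r α z ∈ B)
    {z : Fin d → ℤ} (hz : z ∈ P) : (srsMap d r α)^[d] z ∈ univ.pi fun _ => B :=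
  fun i _ => iterate_srsMap_apply_mem hP hB hz d i (Nat.le_add_left d i)

theorem srsDigit_mem_Icc (h1 : ∑ i, |r i| ≤ α) (hα : α < 1) {z : Fin d → ℤ}
    (hz : z ∈ univ.pi fun _ => Icc (-1) 1) : srsDigit r α z ∈ Icc (-1) 0 := by
  have hbound := abs_le.mp <| (abs_sum_mul_le_sum_abs Finset.univ r _ fun j _ => by
    simpa using intCast_mem_Icc (hz j (mem_univ _))).trans h1
  have hnonneg : 0 ≤ ⌊(∑ j, r j * z j) + α⌋ := Int.floor_nonneg.mpr (by linarith)
  have hlt : ⌊(∑ j, r j * z j) + α⌋ < 2 := Int.floor_lt.mpr (by push_cast; linarith)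
  simp only [srsDigit, mem_Icc]
  omega

theorem srsDigit_eq_zero (h1 : ∑ i, |r i| ≤ α)
    (h2 : ∑ i ∈ Finset.univ.filter (fun i => r i < 0), r i > α - 1) {z : Fin d → ℤ}
    (hz : z ∈ univ.pi fun _ => Icc (-1) 0) : srsDigit r α z = 0 := by
  have hz' : ∀ j ∈ Finset.univ, (z j : ℝ) ∈ Icc (-1) 0 := fun j _ => by
    simpa using intCast_mem_Icc (hz j (mem_univ _))
  have hlower := (abs_le.mp <| (abs_sum_mul_le_sum_abs Finset.univ r _ fun j hj =>
    Icc_subset_Icc_right zero_le_one (hz' j hj)).trans h1).1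
  have hupper := sum_mul_le_neg_sum_filter_neg Finset.univ r _ hz'
  simp only [srsDigit, neg_eq_zero, Int.floor_eq_zero_iff, mem_Ico]
  constructor <;> linarith

end srsMap

theorem stmt10_general (d : ℕ) (α : ℝ) (hα : α ∈ Set.Ico (0 : ℝ) 1)
    (r : Fin d → ℝ) (h1 : ∑ i, |r i| ≤ α)
    (h2 : ∑ i ∈ Finset.univ.filter (fun i => r i < 0), r i > α - 1) :
    let V : Set (Fin d → ℤ) := {z | ∀ i, z i = -1 ∨ z i = 0 ∨ z i = 1}
    (∀ z ∈ V, srsMap d r α z ∈ V) ∧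
    (∀ z ∈ V, ∀ k : ℕ, 0 < k → (srsMap d r α)^[k] z = z → z = 0) ∧
    (∀ z ∈ V, ∃ k : ℕ, (srsMap d r α)^[k] z = 0) := by
  intro V
  have hV : V = univ.pi fun _ => Icc (-1) 1 := by
    ext z
    simp only [V, mem_ofPred_eq, mem_univ_pi, mem_Icc]
    exact forall_congr' fun i => by omega
  have hdigitV : ∀ z ∈ univ.pi fun _ => Icc (-1) 1, srsDigit r α z ∈ Icc (-1) 1 :=
    fun z hz => Icc_subset_Icc_right zero_le_one (srsDigit_mem_Icc h1 hα.2 hz)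
  have hdigitW : ∀ z ∈ univ.pi fun _ => Icc (-1) 0, srsDigit r α z ∈ ({0} : Set ℤ) :=
    fun z hz => srsDigit_eq_zero h1 h2 hz
  have hW : MapsTo (srsMap d r α) (univ.pi fun _ => Icc (-1) 0) (univ.pi fun _ => Icc (-1) 0) :=
    srsMap_mapsTo_pi fun z hz => by rw [hdigitW z hz]; simp
  have hzero : ∀ z ∈ V, (srsMap d r α)^[d + d] z = 0 := by
    intro z hz
    rw [hV] at hz
    have hd := iterate_srsMap_mem_pi (srsMap_mapsTo_pi hdigitV)
      (fun z hz => srsDigit_mem_Icc h1 hα.2 hz) hz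
    rw [iterate_add_apply]
    funext i
    exact iterate_srsMap_mem_pi hW hdigitW hd i (mem_univ _)
  refine ⟨fun z hz => hV ▸ srsMap_mapsTo_pi hdigitV (hV ▸ hz), ?_, fun z hz => ⟨d + d, hzero z hz⟩⟩
  intro z hz k hk hper
  exact IsPeriodicPt.eq_of_iterate_eq_fixedPt hper hk (srsMap_zero hα) (hzero z hz)

theorem stmt10 (d : ℕ) (hd : 1 ≤ d) (α : ℝ) (hα : α ∈ Set.Ico (0 : ℝ) 1)
    (r : Fin d → ℝ) (h1 : ∑ i, |r i| ≤ α)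
    (h2 : ∑ i ∈ Finset.univ.filter (fun i => r i < 0), r i > α - 1) :
    let V : Set (Fin d → ℤ) := {z | ∀ i, z i = -1 ∨ z i = 0 ∨ z i = 1}
    (∀ z ∈ V, srsMap d r α z ∈ V) ∧
    (∀ z ∈ V, ∀ k : ℕ, 0 < k → (srsMap d r α)^[k] z = z → z = 0) ∧
    (∀ z ∈ V, ∃ k : ℕ, (srsMap d r α)^[k] z = 0) :=
  stmt10_general d α hα r h1 h2
end

section
/- Let d ≥ 1, α ∈ [0,1), and r = (r_0, ..., r_{d-1}) ∈ ℝ^d with 0 ≤ r_0 ≤ r_1 ≤ ... ≤ r_{d-1} ≤ α. Then for every z in the set V of alternating-sign vectors in {-1,0,1}^d, the α-SRS map τ_{r,α} satisfies τ_{r,α}(z) ∈ V, and τ_{r,α}^k(z) = 0 for some k ≥ 0. -/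
def InV {d : ℕ} (z : Fin d → ℤ) : Prop :=
  (∀ i, z i = -1 ∨ z i = 0 ∨ z i = 1) ∧
    ∀ i j : Fin d, i < j → (∀ k, i < k → k < j → z k = 0) → z i * z j ≤ 0

lemma exists_last {d : ℕ} (z : Fin d → ℤ) (hne : ¬ ∀ k, z k = 0) :
    ∃ i, z i ≠ 0 ∧ ∀ k, i < k → z k = 0 := by
  classical
  set s := Finset.univ.filter fun k => z k ≠ 0 with hs
  push_neg at hne
  obtain ⟨k0, hk0⟩ := hne
  have hsne : s.Nonempty := ⟨k0, by simp [hs, hk0]⟩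
  refine ⟨s.max' hsne, ?_, ?_⟩
  · have := s.max'_mem hsne
    simp [hs] at this
    exact this
  · intro k hk
    by_contra h
    exact absurd (s.le_max' k (by simp [hs, h])) (not_le.mpr hk)

lemma key {d : ℕ} (r : Fin d → ℝ) (hmono : Monotone r) (hr0 : ∀ i, 0 ≤ r i)
    (n : ℕ) : ∀ (z : Fin d → ℤ), InV z → ∀ i : Fin d, (i : ℕ) = n →
    (∀ k, i < k → z k = 0) →
    (z i = 1 → 0 ≤ (∑ j, r j * (z j : ℝ)) ∧ (∑ j, r j * (z j : ℝ)) ≤ r i) ∧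
    (z i = -1 → -(r i) ≤ (∑ j, r j * (z j : ℝ)) ∧ (∑ j, r j * (z j : ℝ)) ≤ 0) := by
  induction n using Nat.strong_induction_on with
  | _ n ih =>
    intro z hz i hi hmax
    classical
    set z' : Fin d → ℤ := Function.update z i 0 with hz'def
    have hz'ne : ∀ j, j ≠ i → z' j = z j := fun j hj => Function.update_of_ne hj _ _
    have hz'i : z' i = 0 := Function.update_self _ _ _
    have hS : (∑ j, r j * (z j : ℝ)) = (∑ j, r j * (z' j : ℝ)) + r i * (z i : ℝ) := by
      have : (∑ j, (r j * (z j : ℝ) - r j * (z' j : ℝ))) = r i * (z i : ℝ) := by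
        rw [Finset.sum_eq_single i]
        · rw [hz'i]; push_cast; ring
        · intro b _ hb
          rw [hz'ne b hb]; ring
        · intro h; exact absurd (Finset.mem_univ i) h
      rw [Finset.sum_sub_distrib] at this
      linarith
    have hz'V : InV z' := by
      constructor
      · intro j
        by_cases hj : j = i
        · subst hj; rw [hz'i]; tauto
        · rw [hz'ne j hj]; exact hz.1 j
      · intro a b hab hbet
        rcases lt_trichotomy b i with hbi | hbi | hbi
        · have ha : z' a = z a := hz'ne a (ne_of_lt (lt_trans hab hbi))
          have hb : z' b = z b := hz'ne b (ne_of_lt hbi)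
          rw [ha, hb]
          apply hz.2 a b hab
          intro k hk1 hk2
          have := hbet k hk1 hk2
          rwa [hz'ne k (ne_of_lt (lt_trans hk2 hbi))] at this
        · subst hbi; rw [hz'i, mul_zero]
        · rw [hz'ne b (ne_of_gt hbi), hmax b hbi, mul_zero]
    by_cases hall : ∀ k, z' k = 0
    · have hS0 : (∑ j, r j * (z' j : ℝ)) = 0 := by
        apply Finset.sum_eq_zero
        intro j _
        rw [hall j]; simp
      rw [hS0, zero_add] at hS
      constructor
      · intro h1
        rw [hS, h1]
        constructor
        · push_cast; nlinarith [hr0 i]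
        · push_cast; nlinarith [hr0 i]
      · intro h1
        rw [hS, h1]
        constructor
        · push_cast; nlinarith [hr0 i]
        · push_cast; nlinarith [hr0 i]
    · obtain ⟨i', hi'ne, hmax'⟩ := exists_last z' hall
      have hi'lt : i' < i := by
        rcases lt_trichotomy i' i with h | h | h
        · exact h
        · exact absurd (h ▸ hz'i) hi'ne
        · exact absurd ((hz'ne i' (ne_of_gt h)).trans (hmax i' h)) hi'ne
      have hzi' : z i' = z' i' := (hz'ne i' (ne_of_lt hi'lt)).symm
      have hbet : ∀ k, i' < k → k < i → z k = 0 := by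
        intro k h1 h2
        have := hmax' k h1
        rwa [hz'ne k (ne_of_lt h2)] at this
      have hprod : z i' * z i ≤ 0 := hz.2 i' i hi'lt hbet
      have hri' : r i' ≤ r i := hmono (le_of_lt hi'lt)
      have hIH := ih (i' : ℕ) (by rw [← hi]; exact hi'lt) z' hz'V i' rfl hmax'
      constructor
      · intro h1
        have hzi'v : z i' = -1 := by
          rcases hz.1 i' with h | h | h
          · exact h
          · exact absurd (hzi'.symm ▸ h) hi'ne
          · exfalso; rw [h, h1] at hprod; norm_num at hprod
        have := hIH.2 (hzi' ▸ hzi'v)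
        rw [hS, h1]
        push_cast
        constructor <;> linarith
      · intro h1
        have hzi'v : z i' = 1 := by
          rcases hz.1 i' with h | h | h
          · exfalso; rw [h, h1] at hprod; norm_num at hprod
          · exact absurd (hzi'.symm ▸ h) hi'ne
          · exact h
        have := hIH.1 (hzi' ▸ hzi'v)
        rw [hS, h1]
        push_cast
        constructor <;> linarith

lemma sum_bounds {d : ℕ} {r : Fin d → ℝ} {α : ℝ} (hmono : Monotone r)
    (hr : ∀ i, 0 ≤ r i ∧ r i ≤ α) (hα0 : 0 ≤ α)
    {z : Fin d → ℤ} (hz : InV z) :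
    -α ≤ (∑ j, r j * (z j : ℝ)) ∧ (∑ j, r j * (z j : ℝ)) ≤ α := by
  by_cases hall : ∀ k, z k = 0
  · have : (∑ j, r j * (z j : ℝ)) = 0 := by
      apply Finset.sum_eq_zero; intro j _; rw [hall j]; simp
    rw [this]; constructor <;> linarith
  · obtain ⟨i, hine, hmax⟩ := exists_last z hall
    have hk := key r hmono (fun i => (hr i).1) (i : ℕ) z hz i rfl hmax
    rcases hz.1 i with h | h | h
    · have := hk.2 h
      constructor <;> [linarith [(hr i).2]; linarith]
    · exact absurd h hine
    · have := hk.1 h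
      constructor <;> [linarith; linarith [(hr i).2]]

lemma last_nonpos {d : ℕ} {r : Fin d → ℝ} (hmono : Monotone r)
    (hr0 : ∀ i, 0 ≤ r i) {z : Fin d → ℤ} (hz : InV z) {i : Fin d}
    (hmax : ∀ k, i < k → z k = 0) (hzi : z i = -1) :
    (∑ j, r j * (z j : ℝ)) ≤ 0 :=
  ((key r hmono hr0 (i : ℕ) z hz i rfl hmax).2 hzi).2

lemma step_inV {d : ℕ} {α : ℝ} (hα0 : 0 ≤ α) (hα1 : α < 1)
    {r : Fin d → ℝ} (hmono : Monotone r) (hr : ∀ i, 0 ≤ r i ∧ r i ≤ α)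
    {z : Fin d → ℤ} (hz : InV z) : InV (srsMap d r α z) := by
  set S := (∑ j, r j * (z j : ℝ)) with hSdef
  obtain ⟨hSl, hSu⟩ := sum_bounds hmono hr hα0 hz
  have h0 : (0 : ℝ) ≤ S + α := by linarith
  have h2 : S + α < 2 := by linarith
  have hfl : ⌊S + α⌋ = 0 ∨ ⌊S + α⌋ = 1 := by
    have h1 : 0 ≤ ⌊S + α⌋ := Int.floor_nonneg.mpr h0
    have h3 : ⌊S + α⌋ < 2 := by
      have := Int.floor_lt.mpr (show S + α < ((2 : ℤ) : ℝ) by push_cast; linarith)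
      exact this
    omega
  constructor
  · intro i
    by_cases hi : (i : ℕ) + 1 < d
    · simp only [srsMap, dif_pos hi]
      exact hz.1 _
    · simp only [srsMap, dif_neg hi]
      rcases hfl with h | h <;> rw [h] <;> norm_num
  · intro i j hij hbet
    have hijn : (i : ℕ) < (j : ℕ) := hij
    have hi1 : (i : ℕ) + 1 < d := by have := j.isLt; omega
    have hτi : srsMap d r α z i = z ⟨(i : ℕ) + 1, hi1⟩ := by
      simp only [srsMap, dif_pos hi1]
    by_cases hj1 : (j : ℕ) + 1 < d
    · have hτj : srsMap d r α z j = z ⟨(j : ℕ) + 1, hj1⟩ := by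
        simp only [srsMap, dif_pos hj1]
      rw [hτi, hτj]
      apply hz.2 ⟨(i : ℕ) + 1, hi1⟩ ⟨(j : ℕ) + 1, hj1⟩ (by rw [Fin.lt_def]; simp only [Fin.val_mk]; omega)
      intro k hk1 hk2
      have hk1' : (i : ℕ) + 1 < (k : ℕ) := hk1
      have hk2' : (k : ℕ) < (j : ℕ) + 1 := hk2
      have hkd : (k : ℕ) - 1 + 1 < d := by have := k.isLt; omega
      have hb := hbet ⟨(k : ℕ) - 1, by omega⟩ (by rw [Fin.lt_def]; simp only [Fin.val_mk]; omega)
        (by rw [Fin.lt_def]; simp only [Fin.val_mk]; omega)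
      simp only [srsMap, dif_pos hkd] at hb
      have hek : (⟨(k : ℕ) - 1 + 1, hkd⟩ : Fin d) = k := by
        apply Fin.ext; simp; omega
      rwa [hek] at hb
    · have hτj : srsMap d r α z j = -⌊S + α⌋ := by
        simp only [srsMap, dif_neg hj1, hSdef]
      rw [hτi, hτj]
      rcases hfl with h | h
      · rw [h]; simp
      · rw [h]
        have hS1 : (1 : ℝ) ≤ S + α := by
          have := Int.floor_le (S + α)
          rw [h] at this; push_cast at this; linarith
        have hSpos : 0 < S := by linarith
        have hjd : (j : ℕ) = d - 1 := by have := j.isLt; omega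
        have hmaxi : ∀ k : Fin d, (⟨(i : ℕ) + 1, hi1⟩ : Fin d) < k → z k = 0 := by
          intro k hk
          have hk' : (i : ℕ) + 1 < (k : ℕ) := hk
          have hkd : (k : ℕ) - 1 + 1 < d := by have := k.isLt; omega
          have hb := hbet ⟨(k : ℕ) - 1, by omega⟩ (by rw [Fin.lt_def]; simp only [Fin.val_mk]; omega)
            (by rw [Fin.lt_def]; simp only [Fin.val_mk]; have := k.isLt; omega)
          simp only [srsMap, dif_pos hkd] at hb
          have hek : (⟨(k : ℕ) - 1 + 1, hkd⟩ : Fin d) = k := by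
            apply Fin.ext; simp; omega
          rwa [hek] at hb
        have hne : z ⟨(i : ℕ) + 1, hi1⟩ ≠ -1 := by
          intro hm
          have := last_nonpos hmono (fun i => (hr i).1) hz hmaxi hm
          rw [← hSdef] at this
          linarith
        rcases hz.1 ⟨(i : ℕ) + 1, hi1⟩ with hv | hv | hv
        · exact absurd hv hne
        · rw [hv]; norm_num
        · rw [hv]; norm_num

lemma iter_inV {d : ℕ} {α : ℝ} (hα0 : 0 ≤ α) (hα1 : α < 1)
    {r : Fin d → ℝ} (hmono : Monotone r) (hr : ∀ i, 0 ≤ r i ∧ r i ≤ α)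
    {z : Fin d → ℤ} (hz : InV z) (m : ℕ) : InV ((srsMap d r α)^[m] z) := by
  induction m with
  | zero => exact hz
  | succ m ihm =>
    rw [Function.iterate_succ_apply']
    exact step_inV hα0 hα1 hmono hr ihm

lemma iter_neg {d : ℕ} {α : ℝ} (hα0 : 0 ≤ α) (hα1 : α < 1)
    {r : Fin d → ℝ} (hmono : Monotone r) (hr : ∀ i, 0 ≤ r i ∧ r i ≤ α)
    {z : Fin d → ℤ} (hz : InV z) (m : ℕ) :
    ∀ i : Fin d, d - m ≤ (i : ℕ) →
      ((srsMap d r α)^[m] z) i = -1 ∨ ((srsMap d r α)^[m] z) i = 0 := by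
  induction m with
  | zero => intro i hi; exact absurd i.isLt (by omega)
  | succ m ihm =>
    intro i hi
    rw [Function.iterate_succ_apply']
    set w := (srsMap d r α)^[m] z with hw
    have hwV : InV w := iter_inV hα0 hα1 hmono hr hz m
    by_cases hi1 : (i : ℕ) + 1 < d
    · simp only [srsMap, dif_pos hi1]
      exact ihm ⟨(i : ℕ) + 1, hi1⟩ (by simp; omega)
    · simp only [srsMap, dif_neg hi1]
      obtain ⟨hSl, hSu⟩ := sum_bounds hmono hr hα0 hwV
      have h1 : 0 ≤ ⌊(∑ j, r j * (w j : ℝ)) + α⌋ := Int.floor_nonneg.mpr (by linarith)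
      have h3 : ⌊(∑ j, r j * (w j : ℝ)) + α⌋ < 2 :=
        Int.floor_lt.mpr (show _ < ((2 : ℤ) : ℝ) by push_cast; linarith)
      omega

lemma iter_zero {d : ℕ} {α : ℝ} (hα0 : 0 ≤ α) (hα1 : α < 1)
    {r : Fin d → ℝ} (hmono : Monotone r) (hr : ∀ i, 0 ≤ r i ∧ r i ≤ α) (N : ℕ) :
    ∀ (w : Fin d → ℤ), InV w → (∀ i, w i = -1 ∨ w i = 0) →
    (∀ i : Fin d, N ≤ (i : ℕ) → w i = 0) → (srsMap d r α)^[N] w = 0 := by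
  induction N with
  | zero =>
    intro w _ _ hzero
    funext i
    exact hzero i (Nat.zero_le _)
  | succ N ihN =>
    intro w hwV hwneg hzero
    rw [Function.iterate_succ_apply]
    have hfl : ⌊(∑ j, r j * (w j : ℝ)) + α⌋ = 0 := by
      have hSl := (sum_bounds hmono hr hα0 hwV).1
      have hSu : (∑ j, r j * (w j : ℝ)) ≤ 0 := by
        apply Finset.sum_nonpos
        intro j _
        have hwj : (w j : ℝ) ≤ 0 := by
          rcases hwneg j with h | h <;> rw [h] <;> norm_num
        exact mul_nonpos_of_nonneg_of_nonpos (hr j).1 hwj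
      rw [Int.floor_eq_zero_iff]
      exact Set.mem_Ico.mpr ⟨by linarith, by linarith⟩
    apply ihN
    · exact step_inV hα0 hα1 hmono hr hwV
    · intro i
      by_cases hi1 : (i : ℕ) + 1 < d
      · simp only [srsMap, dif_pos hi1]; exact hwneg _
      · simp only [srsMap, dif_neg hi1, hfl]; norm_num
    · intro i hi
      by_cases hi1 : (i : ℕ) + 1 < d
      · simp only [srsMap, dif_pos hi1]
        exact hzero ⟨(i : ℕ) + 1, hi1⟩ (by simp; omega)
      · simp only [srsMap, dif_neg hi1, hfl]; norm_num

theorem stmt11 (d : ℕ) (hd : 1 ≤ d) (α : ℝ) (hα : α ∈ Set.Ico (0 : ℝ) 1)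
    (r : Fin d → ℝ) (hmono : Monotone r) (hr : ∀ i, 0 ≤ r i ∧ r i ≤ α) :
    let V : Set (Fin d → ℤ) := {z | (∀ i, z i = -1 ∨ z i = 0 ∨ z i = 1) ∧
      ∀ i j : Fin d, i < j → (∀ k, i < k → k < j → z k = 0) → z i * z j ≤ 0}
    (∀ z ∈ V, srsMap d r α z ∈ V) ∧
    (∀ z ∈ V, ∃ k : ℕ, (srsMap d r α)^[k] z = 0) := by
  intro V
  obtain ⟨hα0, hα1⟩ := hα
  have hmem : ∀ z : Fin d → ℤ, z ∈ V ↔ InV z := fun z => Iff.rfl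
  constructor
  · intro z hz
    exact (hmem _).mpr (step_inV hα0 hα1 hmono hr ((hmem z).mp hz))
  · intro z hz
    have hzV : InV z := (hmem z).mp hz
    refine ⟨d + d, ?_⟩
    rw [Function.iterate_add_apply]
    apply iter_zero hα0 hα1 hmono hr d
    · exact iter_inV hα0 hα1 hmono hr hzV d
    · intro i
      exact iter_neg hα0 hα1 hmono hr hzV d i (by omega)
    · intro i hi
      exact absurd i.isLt (by omega)
end

section
/- Let m ≥ 2 and β > 1 the real root of x³ - m x² - m x - m, and r_0 = m/β, r_1 = -m/β - m/β². Then for 1 ≤ j ≤ m we have -β/(β+1) < m/β - m²/β² + (j-m)m/β³ < 1/(β+1); consequently ⌊r_0 (m+1) + r_1 j + β/(β+1)⌋ = m - j. -/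
theorem stmt19 (m : ℤ) (hm : 2 ≤ m) (β : ℝ) (hβ : 1 < β)
    (hroot : β ^ 3 = m * β ^ 2 + m * β + m) (j : ℤ) (hj1 : 1 ≤ j) (hjm : j ≤ m) :
    -β / (β + 1) < m / β - m ^ 2 / β ^ 2 + (j - m) * m / β ^ 3 ∧
    m / β - m ^ 2 / β ^ 2 + (j - m) * m / β ^ 3 < 1 / (β + 1) ∧
    ⌊(m / β) * (m + 1) + (-(m / β) - m / β ^ 2) * j + β / (β + 1)⌋ = m - j := by
  have hm' : (2:ℝ) ≤ (m:ℝ) := by exact_mod_cast hm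
  have hj1' : (1:ℝ) ≤ (j:ℝ) := by exact_mod_cast hj1
  have hjm' : (j:ℝ) ≤ (m:ℝ) := by exact_mod_cast hjm
  have hβ0 : (0:ℝ) < β := by linarith
  have hβm : (m:ℝ) < β := by nlinarith [sq_nonneg β, sq_nonneg (β - m)]
  have hβm1 : β < (m:ℝ) + 1 := by nlinarith [sq_nonneg β, sq_nonneg (β - m)]
  have hβne : β ≠ 0 := ne_of_gt hβ0
  have hβ1 : (0:ℝ) < β + 1 := by linarith
  have hβ1ne : β + 1 ≠ 0 := ne_of_gt hβ1
  have hE : (m:ℝ) / β - (m:ℝ) ^ 2 / β ^ 2 + ((j:ℝ) - m) * m / β ^ 3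
      = ((m:ℝ) * β ^ 2 - (m:ℝ) ^ 2 * β + ((j:ℝ) - m) * m) / β ^ 3 := by
    field_simp
  have hlow : -β / (β + 1) < (m:ℝ) / β - (m:ℝ) ^ 2 / β ^ 2 + ((j:ℝ) - m) * m / β ^ 3 := by
    rw [hE, div_lt_div_iff₀ hβ1 (by positivity)]
    nlinarith [mul_pos hβ0 (mul_pos hβ0 hβ0), sq_nonneg β, mul_pos hβ0 hβ0,
      mul_le_mul_of_nonneg_right hjm' (le_of_lt hβ0)]
  have hhigh : (m:ℝ) / β - (m:ℝ) ^ 2 / β ^ 2 + ((j:ℝ) - m) * m / β ^ 3 < 1 / (β + 1) := by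
    rw [hE, div_lt_div_iff₀ (by positivity) hβ1]
    nlinarith [mul_pos hβ0 (mul_pos hβ0 hβ0), mul_pos hβ0 hβ0,
      mul_le_mul_of_nonneg_right hjm' (le_of_lt hβ0)]
  refine ⟨hlow, hhigh, ?_⟩
  have hid : (↑m / β) * (↑m + 1) + (-(↑m / β) - ↑m / β ^ 2) * (j:ℝ)
      = ((m:ℝ) - j) + ((m:ℝ) / β - (m:ℝ) ^ 2 / β ^ 2 + ((j:ℝ) - m) * m / β ^ 3) := by
    field_simp
    linear_combination ((j:ℝ) - m) * hroot
  rw [Int.floor_eq_iff]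
  constructor
  · push_cast
    rw [hid]
    have h0 : -β / (β + 1) = -(β / (β + 1)) := by ring
    rw [h0, neg_lt] at hlow
    linarith
  · push_cast
    rw [hid]
    have h1 : β / (β + 1) + 1 / (β + 1) = 1 := by field_simp
    linarith
end
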